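/- If the open list cs is correct up to m (with m ≤ i) and the pair (us, ds) is correct up to m with respect to row i and cs, then the pair (tl(us), [w|ds]) — where w is a fresh variable — is correct up to m with respect to row i+1 and cs. -/

import Mathlib

/-- Terms: variables, number constants, and list constructors. -/
inductive Tm : Type
  | var : ℕ → Tm
  | const : ℕ → Tm
  | nil : Tm
  | cons : Tm → Tm → Tm
deriving DecidableEq

/-- The set of variables of a term. -/
def Tm.vars : Tm → Finset ℕ
  | .var x => {x}
  | .const _ => ∅
  | .nil => ∅
  | .cons s t => s.vars ∪ t.vars

/-- A term is ground if it has no variables. -/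
def Tm.Ground (t : Tm) : Prop := t.vars = ∅

/-- Boolean groundness test. -/
def Tm.groundB : Tm → Bool
  | .var _ => false
  | .const _ => true
  | .nil => true
  | .cons s t => s.groundB && t.groundB

/-- Applying a substitution to a term. -/
def Tm.subst (σ : ℕ → Tm) : Tm → Tm
  | .var x => σ x
  | .const c => .const c
  | .nil => .nil
  | .cons s t => .cons (s.subst σ) (t.subst σ)

/-- The open list `[t₁,…,tₙ|v]` with members `ts` and open-list variable `v`. -/
def mkOpen (ts : List Tm) (v : ℕ) : Tm := ts.foldr .cons (.var v)

/-- The (closed) list `[t₁,…,tₙ]` with members `ts`. -/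
def mkList (ts : List Tm) : Tm := ts.foldr .cons .nil

/-- `(ts, v)` describes a g.v.d. (a linear open list with pairwise distinct
    members, each member ground or a variable). -/
def IsGVD (ts : List Tm) (v : ℕ) : Prop :=
  (∀ t ∈ ts, t.Ground ∨ ∃ x, t = .var x) ∧
  ts.Nodup ∧
  (ts.map Tm.vars).Pairwise Disjoint ∧
  ∀ t ∈ ts, v ∉ t.vars

/-- `θ` unifies `s` and `t`. -/
def IsUnifier (s t : Tm) (θ : ℕ → Tm) : Prop := s.subst θ = t.subst θ

/-- `θ` is a most general unifier of `s` and `t`. -/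
def IsMGU (s t : Tm) (θ : ℕ → Tm) : Prop :=
  IsUnifier s t θ ∧ ∀ σ, IsUnifier s t σ → ∃ δ, ∀ x, σ x = (θ x).subst δ

/-- `s` is the `k`-th member (1-based) of the term `t`,
    i.e. `t = [t₁,…,t_{k-1},s|t₀]`. -/
inductive KthMem : Tm → ℕ → Tm → Prop
  | head (s t : Tm) : KthMem (.cons s t) 1 s
  | tail {t : Tm} {k : ℕ} {s : Tm} (a : Tm) : KthMem t k s → KthMem (.cons a t) (k + 1) s

/-- The open list `cs` represents a correct placement up to row `m`:
    it is a g.v.d., its ground members are exactly the queens `1,…,m`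
    (represented as `const j`), and their up diagonal numbers `k + j - i`
    and down diagonal numbers `k + i - j` (w.r.t. any reference row `i`;
    distinctness does not depend on `i`) are respectively pairwise
    distinct. -/
def CorrectUpTo (cs : Tm) (m : ℕ) : Prop :=
  (∃ ts v, cs = mkOpen ts v ∧ IsGVD ts v) ∧
  (∀ j : ℕ, 1 ≤ j → j ≤ m → ∃ k, KthMem cs k (.const j)) ∧
  (∀ k : ℕ, ∀ s : Tm, KthMem cs k s → s.Ground →
      ∃ j : ℕ, 1 ≤ j ∧ j ≤ m ∧ s = .const j) ∧
  (∀ j j' k k' : ℕ, KthMem cs k (.const j) → KthMem cs k' (.const j') →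
      j ≠ j' → k + j ≠ k' + j' ∧ (k : ℤ) - j ≠ (k' : ℤ) - j')

/-- The pair `(us, ds)` is correct up to `m` w.r.t. the row `i` and `cs`:
    each queen `j ∈ {1,…,m}` is a member of `cs`, and whenever its up
    (resp. down) diagonal number `l` in `cs` w.r.t. `i` is positive, the
    `l`-th member of `us` (resp. `ds`) is `j`. -/
def PairCorrect (us ds : Tm) (m i : ℕ) (cs : Tm) : Prop :=
  ∀ j : ℕ, 1 ≤ j → j ≤ m →
    (∃ k, KthMem cs k (.const j)) ∧
    ∀ k : ℕ, KthMem cs k (.const j) →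
      (∀ l : ℕ, (l : ℤ) = (k : ℤ) + j - i → 0 < l → KthMem us l (.const j)) ∧
      (∀ l : ℕ, (l : ℤ) = (k : ℤ) + i - j → 0 < l → KthMem ds l (.const j))

/-- `tlus` is the tail of `us`: either `us = [h|tlus]`, or `us` is a
    variable (an empty open list) and its tail is a fresh variable. -/
def IsTailOf (tlus us : Tm) : Prop :=
  (∃ h, us = .cons h tlus) ∨ ((∃ x, us = .var x) ∧ ∃ y, tlus = .var y)

/-!
Moving from row `i` to row `i + 1` lowers every up diagonal number by one and raises every
down diagonal number by one, which is matched by dropping the head of the up list and pushing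
a fresh head onto the down list. Since `j ≤ m ≤ i` and `k ≥ 1`, the old down diagonal number
`k + i - j` is already positive, so the shifted positions are covered by the hypothesis for
row `i`.
-/

namespace KthMem

lemma one_le {t : Tm} {k : ℕ} {s : Tm} (h : KthMem t k s) : 1 ≤ k := by
  induction h with
  | head => exact le_rfl
  | tail _ _ ih => omega

lemma of_cons_succ {a t s : Tm} {k : ℕ} (hk : 0 < k) (h : KthMem (.cons a t) (k + 1) s) :
    KthMem t k s := by
  cases h with
  | head => omega
  | tail _ h => exact h

end KthMem

lemma IsTailOf.kthMem {tlus us s : Tm} {l : ℕ} (htl : IsTailOf tlus us) (hl : 0 < l)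
    (h : KthMem us (l + 1) s) : KthMem tlus l s := by
  rcases htl with ⟨_, rfl⟩ | ⟨⟨_, rfl⟩, _⟩
  · exact h.of_cons_succ hl
  · cases h

theorem pairCorrect_shift_general (cs us ds tlus : Tm) (m i : ℕ) (w : ℕ)
    (hmi : m ≤ i) (hp : PairCorrect us ds m i cs)
    (htl : IsTailOf tlus us) :
    PairCorrect tlus (.cons (.var w) ds) m (i + 1) cs := by
  intro j hj1 hjm
  obtain ⟨hmem, hdiag⟩ := hp j hj1 hjm
  refine ⟨hmem, fun k hk => ⟨fun l hl hl0 => ?_, fun l hl hl0 => ?_⟩⟩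
  · have hup : KthMem us (l + 1) (.const j) :=
      (hdiag k hk).1 (l + 1) (by push_cast at hl ⊢; omega) l.succ_pos
    exact htl.kthMem hl0 hup
  · have hk1 := hk.one_le
    obtain ⟨l', rfl⟩ : ∃ l', l = l' + 1 := ⟨l - 1, by omega⟩
    have hdown : KthMem ds l' (.const j) :=
      (hdiag k hk).2 l' (by push_cast at hl; omega) (by omega)
    exact .tail _ hdown

/-- if `cs` is correct up to `m ≤ i` and `(us, ds)` is correct
    up to `m` w.r.t. `i` and `cs`, then `(tl(us), [w|ds])` (with `w` a fresh
    variable) is correct up to `m` w.r.t. `i+1` and `cs`. -/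
theorem pairCorrect_shift (cs us ds tlus : Tm) (m i : ℕ) (w : ℕ)
    (hmi : m ≤ i) (hcs : CorrectUpTo cs m) (hp : PairCorrect us ds m i cs)
    (htl : IsTailOf tlus us) :
    PairCorrect tlus (.cons (.var w) ds) m (i + 1) cs :=
  pairCorrect_shift_general cs us ds tlus m i w hmi hp htl
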